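/- arXiv:quant-ph/0405180 — 7 statements merged into one kernel-verified Lean document; each statement's English description precedes it below -/
import Mathlib

section
/- Every topological orthoalgebra is a Hausdorff space. -/
/-- An orthoalgebra: a partial commutative, associative operation `oplus`
(defined on the relation `perp`), with unique orthocomplements, in which
`a ⊥ a` forces `a = 0`. -/
structure Orthoalgebra (L : Type*) where
  perp : L → L → Prop
  oplus : L → L → L
  compl : L → L
  zero : L
  one : L
  perp_comm : ∀ a b, perp a b → perp b a
  oplus_comm : ∀ a b, perp a b → oplus a b = oplus b a
  assoc : ∀ a b c, perp b c → perp a (oplus b c) →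
    perp a b ∧ perp (oplus a b) c ∧ oplus a (oplus b c) = oplus (oplus a b) c
  perp_compl : ∀ a, perp a (compl a)
  oplus_compl : ∀ a, oplus a (compl a) = one
  compl_unique : ∀ a b, perp a b → oplus a b = one → b = compl a
  perp_self_eq_zero : ∀ a, perp a a → a = zero
  zero_def : compl one = zero

/-- The induced order: `a ≤ b` iff `a ⊥ b'`. -/
def Orthoalgebra.le {L : Type*} (A : Orthoalgebra L) (a b : L) : Prop :=
  A.perp a (A.compl b)

/-- The partial difference `b ⊖ a = (a ⊕ b')'` (the unique `c` with `b = a ⊕ c` when `a ≤ b`). -/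
def Orthoalgebra.ominus {L : Type*} (A : Orthoalgebra L) (b a : L) : L :=
  A.compl (A.oplus a (A.compl b))

/-- A topological orthoalgebra: `⊥` is closed, `⊕` is continuous on `⊥`,
and `'` is continuous. -/
structure IsTOA {L : Type*} [TopologicalSpace L] (A : Orthoalgebra L) : Prop where
  closed_perp : IsClosed {p : L × L | A.perp p.1 p.2}
  cont_oplus : ContinuousOn (fun p : L × L => A.oplus p.1 p.2) {p : L × L | A.perp p.1 p.2}
  cont_compl : Continuous A.compl

/-- Compatibility: `a` and `b` admit a Mackey decomposition. -/
def Orthoalgebra.Compat {L : Type*} (A : Orthoalgebra L) (a b : L) : Prop :=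
  ∃ c, A.le c a ∧ A.le c b ∧ A.perp a (A.ominus b c)

/-- An atom: a minimal nonzero element. -/
def Orthoalgebra.IsAtom' {L : Type*} (A : Orthoalgebra L) (a : L) : Prop :=
  a ≠ A.zero ∧ ∀ b, A.le b a → b = A.zero ∨ b = a


namespace Orthoalgebra

variable {L : Type*} (A : Orthoalgebra L)

lemma compl_compl (a : L) : A.compl (A.compl a) = a := by
  have h1 := A.perp_compl a
  have h2 := A.oplus_compl a
  have := A.compl_unique (A.compl a) a (A.perp_comm _ _ h1)
    (by rw [A.oplus_comm _ _ (A.perp_comm _ _ h1)]; exact h2)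
  exact this.symm

lemma perp_one_eq_zero (e : L) (h : A.perp A.one e) : e = A.zero := by
  have he := A.perp_comm _ _ h
  have h1 : A.one = A.oplus e (A.compl e) := (A.oplus_compl e).symm
  rw [h1] at he
  have := A.assoc e e (A.compl e) (A.perp_compl e) he
  exact A.perp_self_eq_zero e this.1

lemma perp_one_zero : A.perp A.one A.zero := by
  have := A.perp_compl A.one
  rwa [A.zero_def] at this

lemma oplus_one_zero : A.oplus A.one A.zero = A.one := by
  have := A.oplus_compl A.one
  rwa [A.zero_def] at this

lemma oplus_zero (a : L) : A.oplus A.zero a = a := by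
  have h1 : A.perp (A.oplus a (A.compl a)) A.zero := by
    rw [A.oplus_compl a]; exact A.perp_one_zero
  have h0 : A.perp A.zero (A.oplus a (A.compl a)) := A.perp_comm _ _ h1
  obtain ⟨hza, hz2, heq⟩ := A.assoc A.zero a (A.compl a) (A.perp_compl a) h0
  have hone : A.oplus (A.oplus A.zero a) (A.compl a) = A.one := by
    rw [← heq, A.oplus_compl a, A.oplus_comm _ _ (A.perp_comm _ _ A.perp_one_zero), A.oplus_one_zero]
  have := A.compl_unique (A.oplus A.zero a) (A.compl a) hz2 hone
  have h2 : A.compl (A.compl a) = A.compl (A.compl (A.oplus A.zero a)) := by rw [← this]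
  rw [A.compl_compl, A.compl_compl] at h2
  exact h2.symm

lemma le_antisymm' (a b : L) (hab : A.le a b) (hba : A.le b a) : a = b := by
  -- decomposition: b = a ⊕ (a ⊕ b')'
  set d := A.oplus a (A.compl b) with hd
  have hdd : A.perp d (A.compl d) := A.perp_compl d
  have hd' : A.perp (A.compl d) (A.oplus a (A.compl b)) := A.perp_comm _ _ hdd
  obtain ⟨h1, h2, h3⟩ := A.assoc (A.compl d) a (A.compl b) hab hd'
  have hone : A.oplus (A.oplus (A.compl d) a) (A.compl b) = A.one := by
    rw [← h3, ← hd, A.oplus_comm _ _ (A.perp_comm _ _ hdd), A.oplus_compl]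
  have hbeq : A.compl b = A.compl (A.oplus (A.compl d) a) :=
    A.compl_unique _ _ h2 hone
  have hb : b = A.oplus (A.compl d) a := by
    have := congrArg A.compl hbeq
    rwa [A.compl_compl, A.compl_compl] at this
  -- use b ≤ a to show d' = 0
  have hba' : A.perp (A.oplus (A.compl d) a) (A.compl a) := by rw [← hb]; exact hba
  have h4 : A.perp (A.compl a) (A.oplus (A.compl d) a) := A.perp_comm _ _ hba'
  have h5 : A.perp (A.compl a) (A.oplus a (A.compl d)) := by
    rwa [A.oplus_comm _ _ h1] at h4
  obtain ⟨h6, h7, h8⟩ := A.assoc (A.compl a) a (A.compl d) (A.perp_comm _ _ h1) h5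
  have hone2 : A.oplus (A.compl a) a = A.one := by
    rw [A.oplus_comm _ _ h6, A.oplus_compl]
  rw [hone2] at h7
  have hz : A.compl d = A.zero := A.perp_one_eq_zero _ h7
  rw [hb, hz, A.oplus_zero]

end Orthoalgebra

theorem toa_t2 {L : Type*} [TopologicalSpace L] (A : Orthoalgebra L) (hA : IsTOA A) :
    T2Space L := by
  rw [t2_iff_isClosed_diagonal]
  have hle : IsClosed {p : L × L | A.le p.1 p.2} := by
    have : {p : L × L | A.le p.1 p.2} =
        (fun p : L × L => (p.1, A.compl p.2)) ⁻¹' {p : L × L | A.perp p.1 p.2} := rfl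
    rw [this]
    exact hA.closed_perp.preimage (continuous_fst.prodMk (hA.cont_compl.comp continuous_snd))
  have hge : IsClosed {p : L × L | A.le p.2 p.1} := by
    have : {p : L × L | A.le p.2 p.1} =
        (fun p : L × L => (p.2, A.compl p.1)) ⁻¹' {p : L × L | A.perp p.1 p.2} := rfl
    rw [this]
    exact hA.closed_perp.preimage (continuous_snd.prodMk (hA.cont_compl.comp continuous_fst))
  have hdiag : Set.diagonal L = {p : L × L | A.le p.1 p.2} ∩ {p : L × L | A.le p.2 p.1} := by
    ext ⟨a, b⟩
    constructor
    · intro h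
      have hab : a = b := h
      subst hab
      exact ⟨A.perp_compl _, A.perp_compl _⟩
    · rintro ⟨h1, h2⟩
      exact A.le_antisymm' a b h1 h2
  rw [hdiag]
  exact hle.inter hge
end

section
/- The projection lattice L(H) of a Hilbert space H, with the operator norm topology, is a topological orthoalgebra: the relation {(P,Q) : PQ = QP = 0} is closed, (P,Q) ↦ P + Q is continuous on this relation, and P ↦ 1 - P is continuous. -/
/-- The projection lattice of a Hilbert space, in the operator norm topology,
is a topological orthoalgebra. -/
theorem projection_lattice_toa {H : Type*} [NormedAddCommGroup H] [InnerProductSpace ℂ H]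
    [CompleteSpace H] :
    IsClosed {p : {P : H →L[ℂ] H // IsSelfAdjoint P ∧ IsIdempotentElem P} ×
        {P : H →L[ℂ] H // IsSelfAdjoint P ∧ IsIdempotentElem P} |
        p.1.1 * p.2.1 = 0 ∧ p.2.1 * p.1.1 = 0} ∧
    ContinuousOn
      (fun p : {P : H →L[ℂ] H // IsSelfAdjoint P ∧ IsIdempotentElem P} ×
        {P : H →L[ℂ] H // IsSelfAdjoint P ∧ IsIdempotentElem P} => p.1.1 + p.2.1)
      {p | p.1.1 * p.2.1 = 0 ∧ p.2.1 * p.1.1 = 0} ∧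
    Continuous (fun P : {P : H →L[ℂ] H // IsSelfAdjoint P ∧ IsIdempotentElem P} => 1 - P.1) := by
  have h1 : Continuous fun p : {P : H →L[ℂ] H // IsSelfAdjoint P ∧ IsIdempotentElem P} ×
      {P : H →L[ℂ] H // IsSelfAdjoint P ∧ IsIdempotentElem P} => p.1.1 :=
    continuous_subtype_val.comp continuous_fst
  have h2 : Continuous fun p : {P : H →L[ℂ] H // IsSelfAdjoint P ∧ IsIdempotentElem P} ×
      {P : H →L[ℂ] H // IsSelfAdjoint P ∧ IsIdempotentElem P} => p.2.1 :=
    continuous_subtype_val.comp continuous_snd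
  refine ⟨?_, ?_, ?_⟩
  · have : {p : {P : H →L[ℂ] H // IsSelfAdjoint P ∧ IsIdempotentElem P} ×
        {P : H →L[ℂ] H // IsSelfAdjoint P ∧ IsIdempotentElem P} |
        p.1.1 * p.2.1 = 0 ∧ p.2.1 * p.1.1 = 0} =
        {p | p.1.1 * p.2.1 = 0} ∩ {p | p.2.1 * p.1.1 = 0} := rfl
    rw [this]
    exact (isClosed_singleton.preimage (h1.mul h2)).inter
      (isClosed_singleton.preimage (h2.mul h1))
  · exact (h1.add h2).continuousOn
  · exact continuous_const.sub continuous_subtype_val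
end

section
/- Let L be a compact topological orthoalgebra. Then the set Comp(L) of compatible pairs of L is closed in L × L. -/
/-!
`Comp(L)` is the projection to `(a, b)` of the Mackey relation `{(c, a, b) | c ≤ a, c ≤ b,
a ⊥ (b ⊖ c)}`, which is closed because `≤` is closed and `⊖` is continuous on `≤`. Projecting
away a compact factor is a closed map (tube lemma), so `L` need not be shown Hausdorff.
-/

def Orthoalgebra.mackeySet {L : Type*} (A : Orthoalgebra L) : Set (L × L × L) :=
  {q | A.le q.1 q.2.1 ∧ A.le q.1 q.2.2 ∧ A.perp q.2.1 (A.ominus q.2.2 q.1)}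

theorem Orthoalgebra.setOf_compat_eq_image_mackeySet {L : Type*} (A : Orthoalgebra L) :
    {p : L × L | A.Compat p.1 p.2} = Prod.snd '' A.mackeySet := by
  ext ⟨a, b⟩
  constructor
  · rintro ⟨c, hmackey⟩
    exact ⟨(c, a, b), hmackey, rfl⟩
  · rintro ⟨⟨c, a', b'⟩, hmackey, hab⟩
    obtain ⟨rfl, rfl⟩ := Prod.mk.inj hab
    exact ⟨c, hmackey⟩

namespace IsTOA

variable {L : Type*} [TopologicalSpace L] {A : Orthoalgebra L}

theorem isClosed_le (hA : IsTOA A) : IsClosed {p : L × L | A.le p.1 p.2} :=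
  hA.closed_perp.preimage (continuous_fst.prodMk (hA.cont_compl.comp continuous_snd))

theorem continuousOn_ominus (hA : IsTOA A) :
    ContinuousOn (fun p : L × L => A.ominus p.2 p.1) {p | A.le p.1 p.2} :=
  hA.cont_compl.comp_continuousOn <|
    hA.cont_oplus.comp (continuous_fst.prodMk (hA.cont_compl.comp continuous_snd)).continuousOn
      fun _ hp => hp

theorem isClosed_mackeySet (hA : IsTOA A) : IsClosed A.mackeySet := by
  have hca : IsClosed {q : L × L × L | A.le q.1 q.2.1} :=
    hA.isClosed_le.preimage (continuous_fst.prodMk (continuous_fst.comp continuous_snd))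
  have hcb : IsClosed {q : L × L × L | A.le q.1 q.2.2} :=
    hA.isClosed_le.preimage (continuous_fst.prodMk (continuous_snd.comp continuous_snd))
  have hominus : ContinuousOn (fun q : L × L × L => A.ominus q.2.2 q.1)
      {q | A.le q.1 q.2.2} :=
    hA.continuousOn_ominus.comp
      (continuous_fst.prodMk (continuous_snd.comp continuous_snd)).continuousOn fun _ hq => hq
  exact hca.inter <| ((continuous_fst.comp continuous_snd).continuousOn.prodMk hominus)
    |>.preimage_isClosed_of_isClosed hcb hA.closed_perp

end IsTOA

theorem comp_closed {L : Type*} [TopologicalSpace L] [CompactSpace L]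
    (A : Orthoalgebra L) (hA : IsTOA A) :
    IsClosed {p : L × L | A.Compat p.1 p.2} := by
  rw [A.setOf_compat_eq_image_mackeySet]
  exact isClosedMap_snd_of_compactSpace _ hA.isClosed_mackeySet
end

section
/- Let L be a compact topological orthoalgebra and b ∈ L. Then the set Comp(b) of elements compatible with b is closed in L. -/
theorem comp_b_closed {L : Type*} [TopologicalSpace L] [CompactSpace L]
    (A : Orthoalgebra L) (hA : IsTOA A) (b : L) :
    IsClosed {a : L | A.Compat a b} := by
  -- S in coordinates (c, a)
  set T2 : Set (L × L) := {p : L × L | A.perp p.1 (A.compl b)} with hT2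
  have hT2closed : IsClosed T2 := by
    have : T2 = (fun p : L × L => (p.1, A.compl b)) ⁻¹' {q : L × L | A.perp q.1 q.2} := rfl
    rw [this]
    exact hA.closed_perp.preimage (by continuity)
  have hT1closed : IsClosed {p : L × L | A.perp p.1 (A.compl p.2)} := by
    have : {p : L × L | A.perp p.1 (A.compl p.2)}
        = (fun p : L × L => (p.1, A.compl p.2)) ⁻¹' {q : L × L | A.perp q.1 q.2} := rfl
    rw [this]
    exact hA.closed_perp.preimage (continuous_fst.prodMk (hA.cont_compl.comp continuous_snd))
  -- f : (c, a) ↦ (a, (b ⊖ c)) = (a, compl (oplus c (compl b)))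
  set f : L × L → L × L := fun p => (p.2, A.compl (A.oplus p.1 (A.compl b))) with hf
  have hfc : ContinuousOn f T2 := by
    apply ContinuousOn.prodMk (continuous_snd.continuousOn)
    apply hA.cont_compl.comp_continuousOn
    have : ContinuousOn (fun p : L × L => A.oplus p.1 (A.compl b)) T2 := by
      have := hA.cont_oplus.comp
        (f := fun p : L × L => (p.1, A.compl b))
        (continuous_fst.prodMk continuous_const).continuousOn
        (fun p hp => hp)
      exact this
    exact this
  have hS : IsClosed (T2 ∩ f ⁻¹' {q : L × L | A.perp q.1 q.2}) :=
    hfc.preimage_isClosed_of_isClosed hT2closed hA.closed_perp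
  have key : IsClosed ({p : L × L | A.perp p.1 (A.compl p.2)} ∩
      (T2 ∩ f ⁻¹' {q : L × L | A.perp q.1 q.2})) := hT1closed.inter hS
  have himg : {a : L | A.Compat a b} = Prod.snd '' ({p : L × L | A.perp p.1 (A.compl p.2)} ∩
      (T2 ∩ f ⁻¹' {q : L × L | A.perp q.1 q.2})) := by
    ext a
    constructor
    · rintro ⟨c, h1, h2, h3⟩
      exact ⟨(c, a), ⟨h1, h2, h3⟩, rfl⟩
    · rintro ⟨⟨c, a'⟩, ⟨h1, h2, h3⟩, rfl⟩
      exact ⟨c, h1, h2, h3⟩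
  rw [himg]
  exact isClosedMap_snd_of_compactSpace _ key
end

section
/- In a compact topological orthoalgebra, the closure of a pairwise compatible subset is pairwise compatible, and consequently every maximal pairwise compatible subset is closed. -/
/-! The set of Mackey witnesses `((a, b), c)` is closed, since `⊖` is continuous where it is
defined; projecting it along the compact factor `c` shows that compatibility is a closed relation.
A closed relation holding on `M × M` holds on its closure `closure M × closure M`. -/

section ClosedRelation

variable {X : Type*} [TopologicalSpace X] {r : X → X → Prop}

theorem pairwise_closure_of_isClosed (hr : IsClosed {p : X × X | r p.1 p.2}) {M : Set X}
    (hM : ∀ a ∈ M, ∀ b ∈ M, r a b) : ∀ a ∈ closure M, ∀ b ∈ closure M, r a b := by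
  have hsub : closure M ×ˢ closure M ⊆ {p : X × X | r p.1 p.2} := by
    rw [← closure_prod_eq]
    exact closure_minimal (fun p hp => hM _ hp.1 _ hp.2) hr
  exact fun a ha b hb => hsub (Set.mk_mem_prod ha hb)

theorem isClosed_of_maximal_pairwise (hr : IsClosed {p : X × X | r p.1 p.2}) {M : Set X}
    (hM : ∀ a ∈ M, ∀ b ∈ M, r a b)
    (hmax : ∀ N : Set X, (∀ a ∈ N, ∀ b ∈ N, r a b) → M ⊆ N → N = M) : IsClosed M :=
  hmax _ (pairwise_closure_of_isClosed hr hM) subset_closure ▸ isClosed_closure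

end ClosedRelation

namespace IsTOA

variable {L X : Type*} [TopologicalSpace L] [TopologicalSpace X] {A : Orthoalgebra L}
  {f g : X → L}

theorem isClosed_setOf_le (hA : IsTOA A) (hf : Continuous f) (hg : Continuous g) :
    IsClosed {x | A.le (f x) (g x)} :=
  hA.closed_perp.preimage (hf.prodMk (hA.cont_compl.comp hg))

theorem continuousOn_ominus_s11 (hA : IsTOA A) (hf : Continuous f) (hg : Continuous g) :
    ContinuousOn (fun x => A.ominus (f x) (g x)) {x | A.le (g x) (f x)} :=
  hA.cont_compl.comp_continuousOn <|
    hA.cont_oplus.comp (hg.prodMk (hA.cont_compl.comp hf)).continuousOn fun _ hx => hx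

theorem isClosed_setOf_compat_witness (hA : IsTOA A) :
    IsClosed {q : (L × L) × L | A.le q.2 q.1.1 ∧ A.le q.2 q.1.2 ∧
      A.perp q.1.1 (A.ominus q.1.2 q.2)} := by
  have hb : IsClosed {q : (L × L) × L | A.le q.2 q.1.2} :=
    hA.isClosed_setOf_le continuous_snd (continuous_snd.comp continuous_fst)
  have hperp := (continuous_fst.comp continuous_fst).continuousOn.prodMk
    (hA.continuousOn_ominus_s11 (continuous_snd.comp continuous_fst) continuous_snd)
    |>.preimage_isClosed_of_isClosed hb hA.closed_perp
  exact (hA.isClosed_setOf_le continuous_snd (continuous_fst.comp continuous_fst)).inter hperp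

theorem isClosed_setOf_compat [CompactSpace L] (hA : IsTOA A) :
    IsClosed {p : L × L | A.Compat p.1 p.2} := by
  convert isClosedMap_fst_of_compactSpace _ hA.isClosed_setOf_compat_witness using 1
  ext p
  simp [Orthoalgebra.Compat]

end IsTOA

theorem closure_pairwise_compat {L : Type*} [TopologicalSpace L] [CompactSpace L]
    (A : Orthoalgebra L) (hA : IsTOA A) :
    (∀ M : Set L, (∀ a ∈ M, ∀ b ∈ M, A.Compat a b) →
      ∀ a ∈ closure M, ∀ b ∈ closure M, A.Compat a b) ∧
    (∀ M : Set L, (∀ a ∈ M, ∀ b ∈ M, A.Compat a b) →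
      (∀ N : Set L, (∀ a ∈ N, ∀ b ∈ N, A.Compat a b) → M ⊆ N → N = M) →
      IsClosed M) :=
  ⟨fun _ => pairwise_closure_of_isClosed hA.isClosed_setOf_compat,
    fun _ => isClosed_of_maximal_pairwise hA.isClosed_setOf_compat⟩
end

section
/- Every nonzero element of a topological orthoalgebra has a totally non-orthogonal open neighborhood, i.e., an open neighborhood U such that no two elements of U are orthogonal. -/
theorem totally_nonorthogonal_nbhd {L : Type*} [TopologicalSpace L] (A : Orthoalgebra L)
    (hA : IsTOA A) (a : L) (ha : a ≠ A.zero) :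
    ∃ U : Set L, IsOpen U ∧ a ∈ U ∧ ∀ x ∈ U, ∀ y ∈ U, ¬ A.perp x y := by
  have hmem : (a, a) ∈ {p : L × L | A.perp p.1 p.2}ᶜ := by
    intro h
    exact ha (A.perp_self_eq_zero a h)
  obtain ⟨U, V, hU, hV, haU, haV, hUV⟩ :=
    isOpen_prod_iff.1 hA.closed_perp.isOpen_compl a a hmem
  refine ⟨U ∩ V, hU.inter hV, ⟨haU, haV⟩, ?_⟩
  rintro x ⟨hx, -⟩ y ⟨-, hy⟩ hperp
  exact hUV (Set.mk_mem_prod hx hy) hperp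
end

section
/- Let L be a compact topological orthoalgebra in which 0 is an isolated point. Then there is a finite bound n such that every pairwise orthogonal subset of L \ {0} has at most n elements. -/
theorem bounded_orthogonal_sets {L : Type*} [TopologicalSpace L] [CompactSpace L]
    (A : Orthoalgebra L) (hA : IsTOA A) (h0 : IsOpen ({A.zero} : Set L)) :
    ∃ n : ℕ, ∀ S : Set L, (∀ a ∈ S, a ≠ A.zero) → S.Pairwise A.perp →
      S.Finite ∧ S.ncard ≤ n := by
  classical
  -- Every nonzero element has an open neighborhood containing no two orthogonal elements.
  have hU : ∀ x : L, x ≠ A.zero → ∃ U : Set L, IsOpen U ∧ x ∈ U ∧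
      ∀ y ∈ U, ∀ z ∈ U, ¬ A.perp y z := by
    intro x hx
    have hxx : ¬ A.perp x x := fun h => hx (A.perp_self_eq_zero x h)
    have hW : IsOpen {p : L × L | A.perp p.1 p.2}ᶜ := hA.closed_perp.isOpen_compl
    have hmem : ((x, x) : L × L) ∈ {p : L × L | A.perp p.1 p.2}ᶜ := hxx
    rcases (isOpen_prod_iff.mp hW) x x hmem with ⟨u, v, hu, hv, hxu, hxv, huv⟩
    refine ⟨u ∩ v, hu.inter hv, ⟨hxu, hxv⟩, ?_⟩
    intro y hy z hz h
    exact huv (Set.mk_mem_prod hy.1 hz.2) h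
  set K : Set L := {A.zero}ᶜ with hK
  have hKcl : IsClosed K := isClosed_compl_iff.mpr h0
  have hKc : IsCompact K := hKcl.isCompact
  -- choose neighborhoods
  let U : L → Set L := fun x => if h : x = A.zero then Set.univ else (hU x h).choose
  have hUo : ∀ x, IsOpen (U x) := by
    intro x
    by_cases h : x = A.zero
    · simp [U, h]
    · simpa [U, h] using (hU x h).choose_spec.1
  have hUm : ∀ x, x ∈ U x := by
    intro x
    by_cases h : x = A.zero
    · simp [U, h]
    · simpa [U, h] using (hU x h).choose_spec.2.1
  have hUp : ∀ x, x ≠ A.zero → ∀ y ∈ U x, ∀ z ∈ U x, ¬ A.perp y z := by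
    intro x h
    simpa [U, h] using (hU x h).choose_spec.2.2
  obtain ⟨t, hts, hcov⟩ := hKc.elim_nhds_subcover U
    (fun x _ => (hUo x).mem_nhds (hUm x))
  refine ⟨t.card, ?_⟩
  intro S hS hSp
  -- map each element of S to a member of t whose neighborhood contains it
  let f : L → L := fun x => if h : ∃ a ∈ t, x ∈ U a then h.choose else A.zero
  have hf : ∀ x ∈ S, f x ∈ t ∧ x ∈ U (f x) := by
    intro x hx
    have hxK : x ∈ K := hS x hx
    have := hcov hxK
    rw [Set.mem_iUnion₂] at this
    obtain ⟨a, ha, hxa⟩ := this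
    have hex : ∃ a ∈ t, x ∈ U a := ⟨a, ha, hxa⟩
    simp only [f, dif_pos hex]
    exact ⟨hex.choose_spec.1, hex.choose_spec.2⟩
  have hinj : Set.InjOn f S := by
    intro x hx y hy hxy
    by_contra hne
    have hperp := hSp hx hy hne
    obtain ⟨hft, hxu⟩ := hf x hx
    obtain ⟨_, hyu⟩ := hf y hy
    have hfz : f x ≠ A.zero := hts _ hft
    exact hUp (f x) hfz x hxu y (hxy ▸ hyu) hperp
  have himg : f '' S ⊆ ↑t := by
    rintro _ ⟨x, hx, rfl⟩
    exact (hf x hx).1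
  have hfin : (f '' S).Finite := t.finite_toSet.subset himg
  have hSfin : S.Finite := (hfin.of_finite_image hinj)
  refine ⟨hSfin, ?_⟩
  calc S.ncard = (f '' S).ncard := (Set.ncard_image_of_injOn hinj).symm
    _ ≤ (↑t : Set L).ncard := Set.ncard_le_ncard himg t.finite_toSet
    _ = t.card := by simp [Set.ncard_coe_finset]
end
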